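/- In the Lambek grammar with lexical types A : (s/r)/s, B : s/(s/r), C : s (with s, r atomic and s distinguished), for every n ∈ ℕ the sequent Bⁿ Aⁿ C ⊢ s is derivable in the Lambek calculus S_IE. -/
import Mathlib

inductive OType (Pr : Type) where
  | atom : Pr → OType Pr
  | over : OType Pr → OType Pr → OType Pr   -- `over β α` is β/α
  | under : OType Pr → OType Pr → OType Pr  -- `under α β` is α\β
deriving DecidableEq

/-- The product-free Lambek calculus S_IE on sequents `Γ ⊢ β` with `Γ` a
nonempty word of types (the lexicon rule replaces each lexical symbol by one
of its types, so words of lexical symbols are analysed through their type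
assignments). -/
inductive Der {Pr : Type} : List (OType Pr) → OType Pr → Prop where
  | ax (α : OType Pr) : Der [α] α
  | introR {Γ : List (OType Pr)} {α β : OType Pr} :
      Γ ≠ [] → Der (Γ ++ [α]) β → Der Γ (.over β α)
  | introL {Γ : List (OType Pr)} {α β : OType Pr} :
      Γ ≠ [] → Der (α :: Γ) β → Der Γ (.under α β)
  | elimR {Γ Δ : List (OType Pr)} {α β : OType Pr} :
      Der Γ (.over β α) → Der Δ α → Der (Γ ++ Δ) β
  | elimL {Γ Δ : List (OType Pr)} {α β : OType Pr} :
      Der Γ (.under α β) → Der Δ α → Der (Δ ++ Γ) β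

/-- Atomic types of the grammar G₁. -/
inductive At where
  | s | r
deriving DecidableEq

/-- A : (s/r)/s -/
def tyA : OType At := .over (.over (.atom .s) (.atom .r)) (.atom .s)
/-- B : s/(s/r) -/
def tyB : OType At := .over (.atom .s) (.over (.atom .s) (.atom .r))
/-- C : s -/
def tyC : OType At := .atom .s

lemma repl_shift {α : Type} (a : α) (n : ℕ) (Δ : List α) :
    List.replicate n a ++ a :: Δ = a :: (List.replicate n a ++ Δ) := by
  induction n with
  | zero => simp
  | succ n ih => simp [List.replicate_succ, ih]

lemma key (n : ℕ) : ∀ (Δ : List (OType At)), Δ ≠ [] →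
    Der Δ (.over (.atom .s) (.atom .r)) →
    Der (List.replicate n tyB ++ List.replicate n tyA ++ Δ) (.over (.atom .s) (.atom .r)) := by
  induction n with
  | zero => intro Δ _ h; simpa using h
  | succ n ih =>
      intro Δ hne h
      have d1 : Der (Δ ++ [OType.atom At.r]) (.atom At.s) :=
        Der.elimR h (Der.ax _)
      have d2 : Der ([tyA] ++ (Δ ++ [OType.atom At.r])) (.over (.atom .s) (.atom .r)) :=
        Der.elimR (Der.ax tyA) d1
      have d3 := ih (tyA :: (Δ ++ [OType.atom At.r])) (by simp) d2
      have d4 : Der ([tyB] ++ (List.replicate n tyB ++ List.replicate n tyA ++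
          (tyA :: (Δ ++ [OType.atom At.r])))) (.atom At.s) :=
        Der.elimR (Der.ax tyB) d3
      have d5 : Der ((tyB :: (List.replicate n tyB ++ List.replicate n tyA ++ tyA :: Δ))
          ++ [OType.atom At.r]) (.atom At.s) := by
        simpa using d4
      have d6 := Der.introR (by simp) d5
      have heq : tyB :: (List.replicate n tyB ++ List.replicate n tyA ++ tyA :: Δ)
          = List.replicate (n+1) tyB ++ List.replicate (n+1) tyA ++ Δ := by
        simp [List.replicate_succ, repl_shift]
      rwa [heq] at d6

/-- In the Lambek grammar with lexicon A : (s/r)/s, B : s/(s/r), C : s, for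
every n the sequent Bⁿ Aⁿ C ⊢ s is derivable in S_IE. -/
theorem BnAnC_derivable (n : ℕ) :
    Der (List.replicate n tyB ++ List.replicate n tyA ++ [tyC]) (.atom At.s) := by
  cases n with
  | zero => simpa [tyC] using Der.ax (OType.atom At.s)
  | succ n =>
      have h0 : Der ([tyA] ++ [tyC]) (.over (.atom .s) (.atom .r)) :=
        Der.elimR (Der.ax tyA) (Der.ax (OType.atom At.s))
      have h1 := key n ([tyA, tyC]) (by simp) h0
      have h2 : Der ([tyB] ++ (List.replicate n tyB ++ List.replicate n tyA ++ [tyA, tyC]))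
          (.atom At.s) := Der.elimR (Der.ax tyB) h1
      have heq : [tyB] ++ (List.replicate n tyB ++ List.replicate n tyA ++ [tyA, tyC])
          = List.replicate (n+1) tyB ++ List.replicate (n+1) tyA ++ [tyC] := by
        simp [List.replicate_succ, repl_shift]
      rwa [heq] at h2
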